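/- arXiv:1909.10422 — 3 statements merged into one kernel-verified Lean document; each statement's English description precedes it below -/
import Mathlib

section
/- For every integer n ≥ 1, one has 1/(12n+1) < ln(n!) − n·ln(n) + n − (1/2)·ln(2πn) < 1/(12n). -/
/-!
Write `L n = log (stirlingSeq n)`, so that the quantity in the theorem is `L n - log √π`, and
`L n → log √π` by Stirling's formula. The step `L n - L (n + 1)` expands as
`∑_{k ≥ 1} r^k / (2k + 1)` with `r = (2n + 1)⁻²`. Keeping only the first term, or bounding every
coefficient by `1/3`, squeezes the step strictly between the steps of `1 / (12n + 1)` and of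
`1 / (12n)`; telescoping towards the common limit `0` gives both bounds.
-/

open Real Filter Topology Stirling

section Telescoping

variable {α : Type*} [AddCommGroup α] [LinearOrder α] [IsOrderedAddMonoid α] [TopologicalSpace α]
  [IsTopologicalAddGroup α] [OrderClosedTopology α] {f g : ℕ → α} {a : α}

theorem sub_lt_of_tendsto_of_sub_succ_lt (hf : Tendsto f atTop (𝓝 a))
    (hg : Tendsto g atTop (𝓝 0)) (h : ∀ n, f n - f (n + 1) < g n - g (n + 1)) (n : ℕ) :
    f n - a < g n := by
  have hmono : StrictMono fun k => f k - g k := strictMono_nat_of_lt_succ fun k => by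
    simpa [sub_lt_sub_iff, add_comm] using h k
  have hlim : Tendsto (fun k => f k - g k) atTop (𝓝 a) := by simpa using hf.sub hg
  exact sub_lt_comm.1 ((hmono n.lt_succ_self).trans_le (hmono.monotone.ge_of_tendsto hlim _))

theorem lt_sub_of_tendsto_of_sub_succ_lt (hf : Tendsto f atTop (𝓝 a))
    (hg : Tendsto g atTop (𝓝 0)) (h : ∀ n, g n - g (n + 1) < f n - f (n + 1)) (n : ℕ) :
    g n < f n - a := by
  have hanti : StrictAnti fun k => f k - g k := strictAnti_nat_of_succ_lt fun k => by
    simpa [sub_lt_sub_iff, add_comm] using h k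
  have hlim : Tendsto (fun k => f k - g k) atTop (𝓝 a) := by simpa using hf.sub hg
  exact lt_sub_comm.1 ((hanti.antitone.le_of_tendsto hlim _).trans_lt (hanti n.lt_succ_self))

end Telescoping

theorem lt_hasSum_pow_div_odd_lt {r s : ℝ} (hr0 : 0 < r) (hr1 : r < 1)
    (hs : HasSum (fun k : ℕ => 1 / (2 * ↑(k + 1) + 1) * r ^ (k + 1)) s) :
    r / 3 < s ∧ s < r / (3 * (1 - r)) := by
  have hpos (k : ℕ) : 0 < 1 / (2 * (↑(k + 1) : ℝ) + 1) * r ^ (k + 1) := by positivity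
  constructor
  · refine hasSum_lt (i := 1) (fun k => ?_) (by simpa using hpos 1) (hasSum_ite_eq 0 (r / 3)) hs
    rcases k with _ | k
    · norm_num [div_eq_inv_mul]
    · simpa using (hpos (k + 1)).le
  · have hgeom : HasSum (fun k : ℕ => r ^ (k + 1) / 3) (r / (3 * (1 - r))) := by
      rw [← div_div, div_eq_mul_inv]
      have hfun : (fun k : ℕ => r ^ (k + 1) / 3) = fun k => r / 3 * r ^ k := funext fun k => by ring
      exact hfun ▸ (hasSum_geometric_of_lt_one hr0.le hr1).mul_left (r / 3)
    refine hasSum_lt (i := 1) (fun k => ?_) ?_ hs hgeom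
    · have : (3 : ℝ) ≤ 2 * ↑(k + 1) + 1 := by push_cast; linarith [k.cast_nonneg (α := ℝ)]
      rw [div_mul_eq_mul_div, one_mul]
      exact div_le_div_of_nonneg_left (by positivity) (by norm_num) this
    · norm_num
      nlinarith [pow_pos hr0 2]

section StirlingStep

variable (n : ℕ)

theorem one_div_two_mul_add_one_sq_lt_one : (1 / (2 * (↑(n + 1) : ℝ) + 1)) ^ 2 < 1 := by
  rw [div_pow, div_lt_one (by positivity)]
  push_cast
  nlinarith [n.cast_nonneg (α := ℝ)]

theorem log_stirlingSeq_sdiff_lt :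
    log (stirlingSeq (n + 1)) - log (stirlingSeq (n + 2)) <
      1 / (12 * ↑(n + 1)) - 1 / (12 * ↑(n + 2)) := by
  convert (lt_hasSum_pow_div_odd_lt (by positivity) (one_div_two_mul_add_one_sq_lt_one n)
    (log_stirlingSeq_sdiff_hasSum n)).2 using 1
  have h : (1 : ℝ) - (1 / (2 * ↑(n + 1) + 1)) ^ 2 =
      4 * ↑(n + 1) * ↑(n + 2) / (2 * ↑(n + 1) + 1) ^ 2 := by
    push_cast; field_simp; ring
  rw [h]; push_cast; field_simp; ring

theorem log_stirlingSeq_sdiff_gt :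
    1 / (12 * ↑(n + 1) + 1) - 1 / (12 * ↑(n + 2) + 1) <
      log (stirlingSeq (n + 1)) - log (stirlingSeq (n + 2)) := by
  refine lt_trans ?_ (lt_hasSum_pow_div_odd_lt (by positivity) (one_div_two_mul_add_one_sq_lt_one n)
    (log_stirlingSeq_sdiff_hasSum n)).1
  push_cast
  rw [div_pow, div_sub_div _ _ (by positivity) (by positivity), div_div,
    div_lt_div_iff₀ (by positivity) (by positivity)]
  nlinarith [n.cast_nonneg (α := ℝ)]

end StirlingStep

theorem log_factorial_sub_eq_log_stirlingSeq_sub {n : ℕ} (hn : n ≠ 0) :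
    log n.factorial - n * log n + n - 1 / 2 * log (2 * π * n) = log (stirlingSeq n) - log √π := by
  have hn' : (0 : ℝ) < n := by positivity
  rw [log_stirlingSeq_formula, log_div hn'.ne' (exp_pos 1).ne', log_exp, log_sqrt pi_pos.le,
    log_mul (by positivity) hn'.ne', log_mul (by positivity) hn'.ne', log_mul two_ne_zero pi_pos.ne']
  ring

theorem tendsto_log_stirlingSeq : Tendsto (fun n => log (stirlingSeq n)) atTop (𝓝 (log √π)) :=
  ((continuousAt_log (sqrt_pos.2 pi_pos).ne').tendsto).comp tendsto_stirlingSeq_sqrt_pi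

/-- Robbins' refinement of Stirling's formula: for every integer `n ≥ 1`,
`1/(12n+1) < ln(n!) - n·ln n + n - (1/2)·ln(2πn) < 1/(12n)`. -/
theorem robbins_stirling (n : ℕ) (hn : 1 ≤ n) :
    1 / (12 * (n : ℝ) + 1)
      < Real.log (Nat.factorial n : ℝ) - n * Real.log n + n - (1 / 2) * Real.log (2 * Real.pi * n)
    ∧ Real.log (Nat.factorial n : ℝ) - n * Real.log n + n - (1 / 2) * Real.log (2 * Real.pi * n)
      < 1 / (12 * (n : ℝ)) := by
  obtain ⟨m, rfl⟩ := Nat.exists_eq_add_of_le' hn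
  have hlim : Tendsto (fun k => log (stirlingSeq (k + 1))) atTop (𝓝 (log √π)) :=
    tendsto_log_stirlingSeq.comp (tendsto_add_atTop_nat 1)
  have hden : Tendsto (fun k : ℕ => 12 * (↑(k + 1) : ℝ)) atTop atTop :=
    (tendsto_natCast_atTop_atTop.comp (tendsto_add_atTop_nat 1)).const_mul_atTop (by norm_num)
  have hupper : Tendsto (fun k : ℕ => 1 / (12 * (↑(k + 1) : ℝ))) atTop (𝓝 0) :=
    tendsto_const_nhds.div_atTop hden
  have hlower : Tendsto (fun k : ℕ => 1 / (12 * (↑(k + 1) : ℝ) + 1)) atTop (𝓝 0) :=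
    tendsto_const_nhds.div_atTop (tendsto_atTop_add_const_right _ 1 hden)
  rw [log_factorial_sub_eq_log_stirlingSeq_sub m.succ_ne_zero]
  exact ⟨lt_sub_of_tendsto_of_sub_succ_lt hlim hlower log_stirlingSeq_sdiff_gt m,
    sub_lt_of_tendsto_of_sub_succ_lt hlim hupper log_stirlingSeq_sdiff_lt m⟩
end

section
/- With σ > 1, q ∈ (0,1), ℓ ≥ 1, σ(1−q)^ℓ > 1, L_q = σ − 1 − σ(1−q)^ℓ ≠ 0, and ρ* = (σ(1−q)^ℓ − 1)/(σ − 1), the maximum value of F is F(ρ*) = [σ·(1−(1−q)^ℓ)·ln(σ(1−(1−q)^ℓ)/(σ−1)) + ln(σ(1−q)^ℓ)] / [1 − σ(1−(1−q)^ℓ)], i.e. F(ρ*) = φ((1−q)^ℓ) where φ(x) = [σ(1−x)·ln(σ(1−x)/(σ−1)) + ln(σx)]/(1 − σ(1−x)). -/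
/-- Value of the rate function at its critical point: with
`F(x) = -(1-x)·ln(1-x) + x·ln(σ(1-q)^ℓ) - ((1+L_q x)/L_q)·ln(1+L_q x)`,
`L_q = σ - 1 - σ(1-q)^ℓ` and `ρ* = (σ(1-q)^ℓ - 1)/(σ - 1)`, one has
`F(ρ*) = φ((1-q)^ℓ)` where
`φ(x) = (σ(1-x)·ln(σ(1-x)/(σ-1)) + ln(σx))/(1 - σ(1-x))`. -/
theorem rate_function_value_at_critical_point (σ q : ℝ) (ℓ : ℕ) (hσ : 1 < σ)
    (hq0 : 0 < q) (hq1 : q < 1) (hℓ : 1 ≤ ℓ)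
    (hbig : 1 < σ * (1 - q) ^ ℓ) (hlt1 : (1 - q) ^ ℓ < 1)
    (L ρ : ℝ) (hL : L = σ - 1 - σ * (1 - q) ^ ℓ) (hL0 : L ≠ 0)
    (hρ : ρ = (σ * (1 - q) ^ ℓ - 1) / (σ - 1))
    (hden : 1 - σ * (1 - (1 - q) ^ ℓ) ≠ 0) :
    -(1 - ρ) * Real.log (1 - ρ) + ρ * Real.log (σ * (1 - q) ^ ℓ)
        - ((1 + L * ρ) / L) * Real.log (1 + L * ρ)
      = (σ * (1 - (1 - q) ^ ℓ) * Real.log (σ * (1 - (1 - q) ^ ℓ) / (σ - 1))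
          + Real.log (σ * (1 - q) ^ ℓ)) / (1 - σ * (1 - (1 - q) ^ ℓ)) := by
  have hσ1 : (0:ℝ) < σ - 1 := by linarith
  have hu : 1 - ρ = σ * (1 - (1 - q) ^ ℓ) / (σ - 1) := by
    rw [hρ]; field_simp; ring
  have hupos : 0 < 1 - ρ := by
    rw [hu]
    exact div_pos (mul_pos (by linarith) (by linarith)) hσ1
  have hspos : (0:ℝ) < σ * (1 - q) ^ ℓ := by linarith
  have hkey : 1 + L * ρ = (σ * (1 - q) ^ ℓ) * (1 - ρ) := by
    rw [hρ, hL]; field_simp; ring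
  have hlog : Real.log (1 + L * ρ)
      = Real.log (σ * (1 - q) ^ ℓ) + Real.log (σ * (1 - (1 - q) ^ ℓ) / (σ - 1)) := by
    rw [hkey, Real.log_mul hspos.ne' hupos.ne', hu]
  rw [hlog, hkey, hu, hρ]
  have hL0' : σ - 1 - σ * (1 - q) ^ ℓ ≠ 0 := hL ▸ hL0
  rw [hL]
  set X := Real.log (σ * (1 - (1 - q) ^ ℓ) / (σ - 1)) with hX
  set Y := Real.log (σ * (1 - q) ^ ℓ) with hY
  rw [eq_div_iff hden]
  field_simp [hL0', hσ1.ne']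
  ring
end

section
/- Let σ > 2 be a real number and define φ(x) = [σ(1−x)·ln(σ(1−x)/(σ−1)) + ln(σx)]/(1 − σ(1−x)) for x near 1/σ with x ≠ 1/σ, extended by φ(1/σ) = 0. Then φ(1/σ) = 0, φ'(1/σ) = 0, and φ''(1/σ) = σ²/(σ−1). -/
/-!
The denominator `D(x) = 1 - σ(1 - x)` equals `2 - σ ≠ 0` at `x = 1/σ`, and the numerator `N`
vanishes there to second order, `N(1/σ) = N'(1/σ) = 0`; in particular `φ = N / D` everywhere.
For a quotient `f / g` with `f(a) = f'(a) = 0` and `g(a) ≠ 0` one has `(f / g)'(a) = 0` and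
`(f / g)''(a) = f''(a) / g(a)`, and here `N''(1/σ) = σ²/(σ-1) - σ² = (2 - σ) σ²/(σ-1)`.
-/

open Filter Topology

section QuotientAtZero

variable {𝕜 : Type*} [NontriviallyNormedField 𝕜] {f g : 𝕜 → 𝕜} {a : 𝕜}

theorem HasDerivAt.div_of_eq_zero {f' g' : 𝕜} (hf : HasDerivAt f f' a)
    (hg : HasDerivAt g g' a) (hga : g a ≠ 0) (hfa : f a = 0) :
    HasDerivAt (fun x => f x / g x) (f' / g a) a := by
  refine (hf.div hg hga).congr_deriv ?_
  rw [hfa, zero_mul, sub_zero]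
  field_simp

theorem hasDerivAt_deriv_div_of_eq_zero {f' g' : 𝕜 → 𝕜} {f'' g'' : 𝕜} (hf : ∀ᶠ x in 𝓝 a, HasDerivAt f (f' x) x)
    (hg : ∀ᶠ x in 𝓝 a, HasDerivAt g (g' x) x) (hf' : HasDerivAt f' f'' a)
    (hg' : HasDerivAt g' g'' a) (hga : g a ≠ 0) (hfa : f a = 0) (hf'a : f' a = 0) :
    HasDerivAt (deriv fun x => f x / g x) (f'' / g a) a := by
  have hgne : ∀ᶠ x in 𝓝 a, g x ≠ 0 := hg.self_of_nhds.continuousAt.eventually_ne hga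
  have hderiv : deriv (fun x => f x / g x) =ᶠ[𝓝 a]
      fun x => (f' x * g x - f x * g' x) / g x ^ 2 := by
    filter_upwards [hf, hg, hgne] with x hfx hgx hgx0 using (hfx.div hgx hgx0).deriv
  have hnum : HasDerivAt (fun x => f' x * g x - f x * g' x) (f'' * g a) a := by
    refine ((hf'.mul hg.self_of_nhds).sub (hf.self_of_nhds.mul hg')).congr_deriv ?_
    rw [hfa, hf'a]
    ring
  -- the numerator of `(f / g)'` vanishes at `a` as well
  have hquot := hnum.div_of_eq_zero (hg.self_of_nhds.fun_pow 2) (pow_ne_zero 2 hga)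
    (by rw [hfa, hf'a]; ring)
  refine (hquot.congr_of_eventuallyEq hderiv).congr_deriv ?_
  field_simp

end QuotientAtZero

section Numerator

open Real

noncomputable def phiNum (σ x : ℝ) : ℝ :=
  σ * (1 - x) * log (σ * (1 - x) / (σ - 1)) + log (σ * x)

noncomputable def phiNumDeriv (σ x : ℝ) : ℝ :=
  -σ * log (σ * (1 - x) / (σ - 1)) - σ + x⁻¹

variable {σ x : ℝ}

theorem hasDerivAt_log_mul_one_sub_div {a b : ℝ} (ha : a ≠ 0) (hb : b ≠ 0) (hx : x ≠ 1) :
    HasDerivAt (fun y => log (a * (1 - y) / b)) (x - 1)⁻¹ x := by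
  have hx' : 1 - x ≠ 0 := sub_ne_zero.mpr (Ne.symm hx)
  refine ((((hasDerivAt_id x).const_sub 1).const_mul a).div_const b).log
    (by positivity) |>.congr_deriv ?_
  simp only [id]
  field_simp
  ring

theorem hasDerivAt_phiNum (hσ0 : σ ≠ 0) (hσ1 : σ ≠ 1) (hx0 : x ≠ 0) (hx1 : x ≠ 1) :
    HasDerivAt (phiNum σ) (phiNumDeriv σ x) x := by
  have hσ1' : σ - 1 ≠ 0 := sub_ne_zero.mpr hσ1
  have hlog := hasDerivAt_log_mul_one_sub_div hσ0 hσ1' hx1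
  have hlin : HasDerivAt (fun y => σ * (1 - y)) (σ * -1) x :=
    ((hasDerivAt_id x).const_sub 1).const_mul σ
  refine ((hlin.mul hlog).add (((hasDerivAt_id x).const_mul σ).log (by positivity))).congr_deriv ?_
  simp only [phiNumDeriv, id]
  field_simp
  ring

theorem hasDerivAt_phiNumDeriv (hσ0 : σ ≠ 0) (hσ1 : σ ≠ 1) (hx0 : x ≠ 0) (hx1 : x ≠ 1) :
    HasDerivAt (phiNumDeriv σ) (-σ * (x - 1)⁻¹ - (x ^ 2)⁻¹) x := by
  have hlog := hasDerivAt_log_mul_one_sub_div hσ0 (sub_ne_zero.mpr hσ1) hx1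
  refine (((hlog.const_mul (-σ)).sub_const σ).add (hasDerivAt_inv hx0)).congr_deriv ?_
  ring

theorem phiNum_inv_self (hσ0 : σ ≠ 0) (hσ1 : σ ≠ 1) : phiNum σ σ⁻¹ = 0 := by
  have : σ * (1 - σ⁻¹) = σ - 1 := by field_simp
  simp [phiNum, this, div_self (sub_ne_zero.mpr hσ1), hσ0]

theorem phiNumDeriv_inv_self (hσ0 : σ ≠ 0) (hσ1 : σ ≠ 1) : phiNumDeriv σ σ⁻¹ = 0 := by
  have : σ * (1 - σ⁻¹) = σ - 1 := by field_simp
  simp [phiNumDeriv, this, div_self (sub_ne_zero.mpr hσ1)]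

end Numerator

/-- Second-order vanishing of `φ` at `1/σ`: for `σ > 2`, the function
`φ(x) = (σ(1-x)·ln(σ(1-x)/(σ-1)) + ln(σx))/(1 - σ(1-x))` for `x ≠ 1/σ`,
extended by `φ(1/σ) = 0`, satisfies `φ(1/σ) = 0`, `φ'(1/σ) = 0` and
`φ''(1/σ) = σ²/(σ-1)`. -/
theorem phi_second_order_expansion_at_inv_sigma (σ : ℝ) (hσ : 2 < σ) :
    (fun x : ℝ => if x = 1 / σ then 0 else
        (σ * (1 - x) * Real.log (σ * (1 - x) / (σ - 1)) + Real.log (σ * x))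
          / (1 - σ * (1 - x))) (1 / σ) = 0
    ∧ deriv (fun x : ℝ => if x = 1 / σ then 0 else
        (σ * (1 - x) * Real.log (σ * (1 - x) / (σ - 1)) + Real.log (σ * x))
          / (1 - σ * (1 - x))) (1 / σ) = 0
    ∧ deriv (deriv (fun x : ℝ => if x = 1 / σ then 0 else
        (σ * (1 - x) * Real.log (σ * (1 - x) / (σ - 1)) + Real.log (σ * x))
          / (1 - σ * (1 - x)))) (1 / σ) = σ ^ 2 / (σ - 1) := by
  have hσ0 : σ ≠ 0 := by positivity
  have hσ1 : σ ≠ 1 := by linarith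
  have hφ : (fun x : ℝ => if x = 1 / σ then 0 else
        (σ * (1 - x) * Real.log (σ * (1 - x) / (σ - 1)) + Real.log (σ * x))
          / (1 - σ * (1 - x))) = fun x => phiNum σ x / (1 - σ * (1 - x)) := by
    ext x
    split_ifs with hx
    · rw [hx, one_div, phiNum_inv_self hσ0 hσ1, zero_div]
    · rfl
  have hden (x : ℝ) : HasDerivAt (fun y => 1 - σ * (1 - y)) σ x := by
    simpa using (((hasDerivAt_id x).const_sub 1).const_mul σ).const_sub 1
  have hden_inv : 1 - σ * (1 - σ⁻¹) = 2 - σ := by field_simp; ring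
  have hden_ne : 1 - σ * (1 - σ⁻¹) ≠ 0 := by rw [hden_inv]; linarith
  have hnum : ∀ᶠ x in 𝓝 σ⁻¹, HasDerivAt (phiNum σ) (phiNumDeriv σ x) x := by
    filter_upwards [eventually_ne_nhds (inv_ne_zero hσ0), eventually_ne_nhds (inv_ne_one.mpr hσ1)]
      with x hx0 hx1 using hasDerivAt_phiNum hσ0 hσ1 hx0 hx1
  rw [hφ, one_div]
  refine ⟨by simp [phiNum_inv_self hσ0 hσ1], ?_, ?_⟩
  · rw [(hnum.self_of_nhds.div_of_eq_zero (hden _) hden_ne (phiNum_inv_self hσ0 hσ1)).deriv,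
      phiNumDeriv_inv_self hσ0 hσ1, zero_div]
  · rw [(hasDerivAt_deriv_div_of_eq_zero hnum (.of_forall hden)
      (hasDerivAt_phiNumDeriv hσ0 hσ1 (inv_ne_zero hσ0) (inv_ne_one.mpr hσ1))
      (hasDerivAt_const _ σ) hden_ne (phiNum_inv_self hσ0 hσ1) (phiNumDeriv_inv_self hσ0 hσ1)).deriv]
    rw [hden_inv]
    have hσ2 : 2 - σ ≠ 0 := by linarith
    have hσ1' : σ - 1 ≠ 0 := sub_ne_zero.mpr hσ1
    field_simp
    ring
end
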